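/- arXiv:2509.08623 — 6 statements merged into one kernel-verified Lean document; each statement's English description precedes it below -/
import Mathlib

section
/- For any quantum state σ (positive semidefinite operator with trace 1) on a finite-dimensional Hilbert space and any operator A with 0 ≤ A ≤ 1, the trace distance satisfies ‖σ - √A σ √A‖₁ ≤ 3·√(1 - Tr(Aσ)). -/
/-!
Put `B = √A` and `E = 1 - B`, so that `σ - BσB = Eσ + BσE`. For a Hermitian `D` the trace
norm is `Re tr (W D)` with `W = sign D` unitary. Both resulting terms are values of the
semi-inner product `⟪X, Y⟫ = tr (Y σ Xᴴ)`, namely `tr (W E σ) = ⟪1, W E⟫` and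
`tr (W B σ E) = ⟪E, W B⟫`, so by Cauchy–Schwarz and unitary invariance they are at most `‖E‖`
and `‖E‖ ‖B‖`, where `‖1‖ = 1`. Finally `‖B‖² = Tr (A σ) ≤ 1`, and `A ≤ √A` (as `0 ≤ A ≤ 1`)
gives `‖E‖² = Tr ((1 - √A)² σ) ≤ Tr ((1 - A) σ) = 1 - Tr (A σ)`; so the trace norm is in fact
at most `2 √(1 - Tr (A σ))`.
-/

open Matrix ComplexOrder

/-- The positive semidefinite square root of a positive semidefinite matrix
(the definition `Matrix.PosSemidef.sqrt` of the older Mathlib, since removed). -/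
noncomputable def Matrix.PosSemidef.sqrt {n 𝕜 : Type*} [Fintype n] [RCLike 𝕜] [DecidableEq n]
    {A : Matrix n n 𝕜} (hA : A.PosSemidef) : Matrix n n 𝕜 :=
  hA.1.eigenvectorUnitary.1 * diagonal ((↑) ∘ (√·) ∘ hA.1.eigenvalues) *
  (star hA.1.eigenvectorUnitary : Matrix n n 𝕜)

/-- Trace norm of a complex matrix: the trace of the positive square root of `Mᴴ * M`. -/
noncomputable def traceNorm {n : ℕ} (M : Matrix (Fin n) (Fin n) ℂ) : ℝ :=
  ((Matrix.posSemidef_conjTranspose_mul_self M).sqrt).trace.re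

open scoped MatrixOrder

lemma CFC.le_sqrt_of_le_one {A : Type*} [Ring A] [StarRing A] [TopologicalSpace A] [Algebra ℝ A]
    [ContinuousFunctionalCalculus ℝ A IsSelfAdjoint] [PartialOrder A] [StarOrderedRing A]
    [NonnegSpectrumClass ℝ A] [IsTopologicalRing A] [T2Space A]
    {a : A} (h0 : 0 ≤ a) (h1 : a ≤ 1) : a ≤ CFC.sqrt a := by
  have hspec : ∀ x ∈ spectrum ℝ a, x ≤ 1 := by
    rw [← le_algebraMap_iff_spectrum_le]; simpa using h1
  rw [CFC.sqrt_eq_real_sqrt a, cfcₙ_eq_cfc]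
  conv_lhs => rw [← cfc_id' ℝ a]
  refine cfc_mono fun x hx => ?_
  have hx0 := spectrum_nonneg_of_nonneg h0 hx
  exact Real.le_sqrt_of_sq_le (by nlinarith [hspec x hx])

namespace Matrix

variable {m 𝕜 : Type*} [Fintype m] [RCLike 𝕜]

lemma PosSemidef.sqrt_eq_cfcSqrt [DecidableEq m] {A : Matrix m m 𝕜} (hA : A.PosSemidef) :
    hA.sqrt = CFC.sqrt A := by
  rw [CFC.sqrt_eq_cfc, cfc_nnreal_eq_real _ A hA.nonneg, hA.1.cfc_eq]
  simp only [IsHermitian.cfc, Unitary.conjStarAlgAut_apply, PosSemidef.sqrt]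
  congr 2
  ext i j
  simp only [diagonal_apply]
  split_ifs <;> simp [max_eq_left (hA.eigenvalues_nonneg i)]

lemma trace_mul_nonneg [DecidableEq m] {X σ : Matrix m m 𝕜} (hX : 0 ≤ X) (hσ : 0 ≤ σ) :
    0 ≤ (X * σ).trace := by
  have hC : (CFC.sqrt X)ᴴ = CFC.sqrt X := (CFC.sqrt_nonneg X).isSelfAdjoint
  rw [← CFC.sqrt_mul_sqrt_self X hX, Matrix.mul_assoc, trace_mul_comm]
  nth_rw 2 [← hC]
  exact (hσ.posSemidef.mul_mul_conjTranspose_same _).trace_nonneg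

lemma re_trace_one_sub_sqrt_mul_mul_conjTranspose_le [DecidableEq m] {A σ : Matrix m m 𝕜}
    (hA0 : 0 ≤ A) (hA1 : A ≤ 1) (hσ : 0 ≤ σ) :
    RCLike.re ((1 - CFC.sqrt A) * σ * (1 - CFC.sqrt A)ᴴ).trace ≤
      RCLike.re ((1 - A) * σ).trace := by
  set B := CFC.sqrt A
  have hB : Bᴴ = B := (CFC.sqrt_nonneg A).isSelfAdjoint
  have hBB : B * B = A := CFC.sqrt_mul_sqrt_self A hA0
  have hexpand :
      ((1 - B) * σ * (1 - B)ᴴ).trace = ((1 - A) * σ).trace - 2 * ((B - A) * σ).trace := by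
    rw [conjTranspose_sub, conjTranspose_one, hB]
    simp only [sub_mul, mul_sub, one_mul, mul_one, trace_sub]
    rw [trace_mul_comm σ B, trace_mul_cycle, hBB]
    ring
  have hBA := RCLike.nonneg_iff.mp
    (trace_mul_nonneg (sub_nonneg.2 (CFC.le_sqrt_of_le_one hA0 hA1)) hσ)
  rw [hexpand]
  simpa using hBA.1

/-- Cauchy–Schwarz for the semi-inner product `⟪X, Y⟫ = tr (Y σ Xᴴ)`. -/
lemma PosSemidef.re_trace_mul_mul_conjTranspose_le {σ : Matrix m m 𝕜} (hσ : σ.PosSemidef)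
    (X Y : Matrix m m 𝕜) :
    RCLike.re (Y * σ * Xᴴ).trace ≤
      √(RCLike.re (X * σ * Xᴴ).trace) * √(RCLike.re (Y * σ * Yᴴ).trace) := by
  let := σ.toMatrixSeminormedAddCommGroup hσ
  let := σ.toMatrixInnerProductSpace hσ
  have := re_inner_le_norm (𝕜 := 𝕜) X Y
  rw [norm_eq_sqrt_re_inner (𝕜 := 𝕜), norm_eq_sqrt_re_inner (𝕜 := 𝕜)] at this
  exact this

lemma trace_mul_mul_conjTranspose_of_isometry [DecidableEq m] {W : Matrix m m 𝕜}
    (hW : Wᴴ * W = 1) (X σ : Matrix m m 𝕜) : (W * X * σ * (W * X)ᴴ).trace = (X * σ * Xᴴ).trace := by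
  rw [conjTranspose_mul, ← Matrix.mul_assoc, trace_mul_comm]
  simp only [← Matrix.mul_assoc, hW, Matrix.one_mul]

end Matrix

lemma traceNorm_eq_re_trace_cfcAbs {n : ℕ} (M : Matrix (Fin n) (Fin n) ℂ) :
    traceNorm M = (CFC.abs M).trace.re := by
  rw [traceNorm, PosSemidef.sqrt_eq_cfcSqrt]
  rfl

lemma Matrix.IsHermitian.exists_unitary_traceNorm_eq {n : ℕ} {D : Matrix (Fin n) (Fin n) ℂ}
    (hD : D.IsHermitian) : ∃ W : Matrix (Fin n) (Fin n) ℂ, Wᴴ * W = 1 ∧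
      traceNorm D = (W * D).trace.re := by
  have : IsSelfAdjoint D := hD
  let sgn : ℝ → ℝ := fun x => if x < 0 then -1 else 1
  have hcont : ContinuousOn sgn (spectrum ℝ D) := D.finite_real_spectrum.continuousOn _
  have hsa : (cfc sgn D)ᴴ = cfc sgn D := cfc_predicate sgn D
  refine ⟨cfc sgn D, ?_, ?_⟩
  · rw [hsa, ← cfc_mul sgn sgn D, ← cfc_one ℝ D]
    refine cfc_congr fun x _ => ?_
    simp only [sgn]; split_ifs <;> norm_num
  · rw [traceNorm_eq_re_trace_cfcAbs, CFC.abs_eq_cfc_norm D]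
    have hmul : cfc sgn D * D = cfc (fun x => sgn x * x) D := by
      rw [cfc_mul sgn (fun x => x) D, cfc_id' ℝ D]
    rw [hmul]
    congr 2
    refine cfc_congr fun x _ => ?_
    simp only [sgn, Real.norm_eq_abs]; split_ifs with h
    · rw [abs_of_neg h]; ring
    · rw [abs_of_nonneg (not_lt.mp h)]; ring

/-- Gentle measurement lemma: if `σ` is a density matrix and `0 ≤ A ≤ 1`, then
`‖σ - √A σ √A‖₁ ≤ 3 √(1 - Tr(Aσ))`. -/
theorem gentle_measurement {n : ℕ} (σ A : Matrix (Fin n) (Fin n) ℂ)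
    (hσ : σ.PosSemidef) (hσtr : σ.trace = 1)
    (hA : A.PosSemidef) (hA1 : ((1 : Matrix (Fin n) (Fin n) ℂ) - A).PosSemidef) :
    traceNorm (σ - hA.sqrt * σ * hA.sqrt) ≤ 3 * Real.sqrt (1 - ((A * σ).trace).re) := by
  rw [hA.sqrt_eq_cfcSqrt]
  set B := CFC.sqrt A
  set E : Matrix (Fin n) (Fin n) ℂ := 1 - B
  set t := ((A * σ).trace).re
  have hB : Bᴴ = B := (CFC.sqrt_nonneg A).isSelfAdjoint
  have hE : Eᴴ = E := by rw [conjTranspose_sub, conjTranspose_one, hB]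
  have hmiss : ((1 - A) * σ).trace.re = 1 - t := by
    rw [sub_mul, one_mul, trace_sub, hσtr, Complex.sub_re, Complex.one_re]
  have hEσ : (E * σ * Eᴴ).trace.re ≤ 1 - t :=
    hmiss ▸ re_trace_one_sub_sqrt_mul_mul_conjTranspose_le hA.nonneg (sub_nonneg.1 hA1.nonneg)
      hσ.nonneg
  have ht : t ≤ 1 :=
    sub_nonneg.mp (hmiss ▸ (Complex.nonneg_iff.mp (trace_mul_nonneg hA1.nonneg hσ.nonneg)).1)
  have hBσ : (B * σ * Bᴴ).trace.re = t := by
    rw [hB, trace_mul_cycle, CFC.sqrt_mul_sqrt_self A hA.nonneg]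
  have hD : (σ - B * σ * B).IsHermitian := by
    simpa only [hB] using hσ.1.sub (isHermitian_conjTranspose_mul_mul B hσ.1)
  obtain ⟨W, hW, hnorm⟩ := hD.exists_unitary_traceNorm_eq
  have hsplit : W * (σ - B * σ * B) = W * E * σ * 1ᴴ + W * B * σ * Eᴴ := by
    rw [hE]; simp only [E, conjTranspose_one, Matrix.mul_one]; noncomm_ring
  calc traceNorm (σ - B * σ * B)
      = (W * E * σ * 1ᴴ).trace.re + (W * B * σ * Eᴴ).trace.re := by
        rw [hnorm, hsplit, trace_add, Complex.add_re]
    _ ≤ √(1 * σ * 1ᴴ).trace.re * √(W * E * σ * (W * E)ᴴ).trace.re +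
          √(E * σ * Eᴴ).trace.re * √(W * B * σ * (W * B)ᴴ).trace.re :=
        add_le_add (hσ.re_trace_mul_mul_conjTranspose_le 1 (W * E))
          (hσ.re_trace_mul_mul_conjTranspose_le E (W * B))
    _ = √(E * σ * Eᴴ).trace.re * (1 + √t) := by
        rw [trace_mul_mul_conjTranspose_of_isometry hW, trace_mul_mul_conjTranspose_of_isometry hW,
          hBσ, conjTranspose_one, Matrix.one_mul, Matrix.mul_one, hσtr, Complex.one_re,
          Real.sqrt_one]
        ring
    _ ≤ √(1 - t) * 2 := by
        gcongr
        linarith [Real.sqrt_le_one.mpr ht]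
    _ ≤ 3 * √(1 - t) := by linarith [Real.sqrt_nonneg (1 - t)]
end

section
/- For the CHSH expression I = ⟨A₀B₀⟩ + ⟨A₀B₁⟩ + ⟨A₁B₀⟩ − ⟨A₁B₁⟩ where A₀,A₁,B₀,B₁ are ±1-valued observables (Hermitian operators with A_i² = 1, B_j² = 1, [A_i ⊗ 1, 1 ⊗ B_j] = 0 via tensor structure) measured on a bipartite quantum state ρ, if the observed value equals I_obs ∈ [2, 2√2], then for either outcome direction, |⟨A₀⟩| ≤ √(8 − I_obs²)/2, where ⟨A₀⟩ = Tr[(A₀ ⊗ 1)ρ]. -/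
/-!
For every unit vector `(c, s)` the operator `2√2 - (c • CHSH + 2s • A₀ ⊗ 1)` is, up to the factor
`4√2`, a sum of two Hermitian squares, so `c ⟨CHSH⟩ + 2s ⟨A₀⟩ ≤ 2√2` in every state. Choosing
`(c, s)` parallel to `(⟨CHSH⟩, 2⟨A₀⟩)` gives `⟨CHSH⟩² + 4⟨A₀⟩² ≤ 8`.
-/

open Matrix ComplexOrder Kronecker

theorem Matrix.kronecker_sub {l m n p α : Type*} [NonUnitalNonAssocRing α] (A : Matrix l m α)
    (B₁ B₂ : Matrix n p α) : A ⊗ₖ (B₁ - B₂) = A ⊗ₖ B₁ - A ⊗ₖ B₂ := by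
  ext
  simp [mul_sub]

theorem Matrix.PosSemidef.trace_conjTranspose_mul_self_mul_nonneg {l n R : Type*} [Fintype l]
    [Fintype n] [CommRing R] [PartialOrder R] [StarRing R] [AddLeftMono R]
    {ρ : Matrix n n R} (hρ : ρ.PosSemidef) (X : Matrix l n R) : 0 ≤ (Xᴴ * X * ρ).trace := by
  rw [Matrix.mul_assoc, trace_mul_comm]
  exact (hρ.mul_mul_conjTranspose_same X).trace_nonneg

theorem sq_add_sq_le_sq_of_forall_unit {x y M : ℝ}
    (h : ∀ c s : ℝ, c ^ 2 + s ^ 2 = 1 → c * x + s * y ≤ M) : x ^ 2 + y ^ 2 ≤ M ^ 2 := by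
  obtain hw | hw := (Real.sqrt_nonneg (x ^ 2 + y ^ 2)).eq_or_lt
  · rw [eq_comm, Real.sqrt_eq_zero (by positivity)] at hw
    rw [hw]
    positivity
  · set w := √(x ^ 2 + y ^ 2)
    have hw2 : w ^ 2 = x ^ 2 + y ^ 2 := Real.sq_sqrt (by positivity)
    have hwM : w ≤ M := by
      have hxy : x / w * x + y / w * y = w := by field_simp; linarith
      exact hxy ▸ h (x / w) (y / w) (by field_simp; linarith)
    rw [← hw2]
    exact pow_le_pow_left₀ hw.le hwM 2

section CHSH

variable {m n : Type*} [Fintype m] [Fintype n] [DecidableEq m] [DecidableEq n]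

def chshOperator {R : Type*} [CommRing R] (a₀ a₁ : Matrix m m R) (b₀ b₁ : Matrix n n R) :
    Matrix (m × n) (m × n) R :=
  a₀ ⊗ₖ b₀ + a₀ ⊗ₖ b₁ + a₁ ⊗ₖ b₀ - a₁ ⊗ₖ b₁

/-- At `c = 1, s = 0, r = √2` this is the standard certificate
`4√2 (2√2 - CHSH) = (2a₀ - √2 b₊)² + (2a₁ - √2 b₋)²`, `b± = b₀ ± b₁`;
the `s`-terms tilt it towards the marginal `a₀ ⊗ 1`. -/
theorem chsh_tilted_sos {S R : Type*} [CommRing S] [CommRing R] [Algebra S R]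
    {a₀ a₁ : Matrix m m R} {b₀ b₁ : Matrix n n R}
    (ha₀ : a₀ * a₀ = 1) (ha₁ : a₁ * a₁ = 1) (hb₀ : b₀ * b₀ = 1) (hb₁ : b₁ * b₁ = 1) (c s r : S) :
    let P := (2 * c) • (a₀ ⊗ₖ 1) - r • (1 ⊗ₖ (b₀ + b₁)) + s • (a₀ ⊗ₖ (b₀ + b₁) - a₁ ⊗ₖ (b₀ - b₁))
    let Q := (2 * c) • (a₁ ⊗ₖ 1) - r • (1 ⊗ₖ (b₀ - b₁)) + s • (a₀ ⊗ₖ (b₀ - b₁) - a₁ ⊗ₖ (b₀ + b₁))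
    P * P + Q * Q = (4 * r ^ 2 + 8 * c ^ 2 + 8 * s ^ 2) • 1 - (8 * s * r) • (a₀ ⊗ₖ 1)
      - (4 * c * r) • chshOperator a₀ a₁ b₀ b₁ := by
  intro P Q
  simp only [P, Q, chshOperator, kronecker_add, kronecker_sub, add_mul, mul_add, sub_mul, mul_sub,
    smul_mul_assoc, mul_smul_comm, ← mul_kronecker_mul, Matrix.one_mul, Matrix.mul_one,
    ha₀, ha₁, hb₀, hb₁, one_kronecker_one]
  match_scalars <;> ring

theorem tilted_chsh_le {𝕜 : Type*} [RCLike 𝕜] {a₀ a₁ : Matrix m m 𝕜} {b₀ b₁ : Matrix n n 𝕜}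
    (ha₀ : a₀.IsHermitian) (ha₁ : a₁.IsHermitian) (hb₀ : b₀.IsHermitian) (hb₁ : b₁.IsHermitian)
    (ha₀' : a₀ * a₀ = 1) (ha₁' : a₁ * a₁ = 1) (hb₀' : b₀ * b₀ = 1) (hb₁' : b₁ * b₁ = 1)
    {ρ : Matrix (m × n) (m × n) 𝕜} (hρ : ρ.PosSemidef) (hρtr : ρ.trace = 1)
    {c s : ℝ} (hcs : c ^ 2 + s ^ 2 = 1) :
    c * RCLike.re (chshOperator a₀ a₁ b₀ b₁ * ρ).trace + s * (2 * RCLike.re ((a₀ ⊗ₖ 1) * ρ).trace)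
      ≤ 2 * √2 := by
  have sos := chsh_tilted_sos ha₀' ha₁' hb₀' hb₁' c s √2
  set P : Matrix (m × n) (m × n) 𝕜 :=
    (2 * c) • (a₀ ⊗ₖ 1) - √2 • (1 ⊗ₖ (b₀ + b₁)) + s • (a₀ ⊗ₖ (b₀ + b₁) - a₁ ⊗ₖ (b₀ - b₁))
  set Q : Matrix (m × n) (m × n) 𝕜 :=
    (2 * c) • (a₁ ⊗ₖ 1) - √2 • (1 ⊗ₖ (b₀ - b₁)) + s • (a₀ ⊗ₖ (b₀ - b₁) - a₁ ⊗ₖ (b₀ + b₁))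
  have hP : Pᴴ = P := by simp [P, conjTranspose_kronecker, ha₀.eq, ha₁.eq, hb₀.eq, hb₁.eq]
  have hQ : Qᴴ = Q := by simp [Q, conjTranspose_kronecker, ha₀.eq, ha₁.eq, hb₀.eq, hb₁.eq]
  have hpos : 0 ≤ RCLike.re ((P * P + Q * Q) * ρ).trace := by
    have h := add_nonneg (hρ.trace_conjTranspose_mul_self_mul_nonneg P)
      (hρ.trace_conjTranspose_mul_self_mul_nonneg Q)
    rw [hP, hQ, ← trace_add, ← add_mul] at h
    exact (RCLike.nonneg_iff.mp h).1
  rw [sos] at hpos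
  simp only [sub_mul, smul_mul_assoc, Matrix.one_mul, trace_sub, trace_smul, hρtr, map_sub,
    RCLike.smul_re, RCLike.one_re] at hpos
  have h2 : √2 ^ 2 = 2 := Real.sq_sqrt zero_le_two
  nlinarith [Real.sqrt_nonneg 2]

end CHSH

theorem chsh_marginal_bound_general {dA dB : ℕ}
    (A : Fin 2 → Matrix (Fin dA) (Fin dA) ℂ)
    (B : Fin 2 → Matrix (Fin dB) (Fin dB) ℂ)
    (hA : ∀ i, (A i).IsHermitian) (hA2 : ∀ i, A i * A i = 1)
    (hB : ∀ j, (B j).IsHermitian) (hB2 : ∀ j, B j * B j = 1)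
    (ρ : Matrix (Fin dA × Fin dB) (Fin dA × Fin dB) ℂ)
    (hρ : ρ.PosSemidef) (hρtr : ρ.trace = 1)
    (Iobs : ℝ)
    (hobs : ((A 0 ⊗ₖ B 0) * ρ).trace + ((A 0 ⊗ₖ B 1) * ρ).trace
        + ((A 1 ⊗ₖ B 0) * ρ).trace - ((A 1 ⊗ₖ B 1) * ρ).trace = (Iobs : ℂ)) :
    |(((A 0 ⊗ₖ (1 : Matrix (Fin dB) (Fin dB) ℂ)) * ρ).trace).re|
      ≤ Real.sqrt (8 - Iobs ^ 2) / 2 := by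
  set a := (((A 0 ⊗ₖ (1 : Matrix (Fin dB) (Fin dB) ℂ)) * ρ).trace).re
  have hchsh : (chshOperator (A 0) (A 1) (B 0) (B 1) * ρ).trace.re = Iobs := by
    simp only [chshOperator, add_mul, sub_mul, trace_add, trace_sub, hobs, Complex.ofReal_re]
  have hsq : Iobs ^ 2 + (2 * a) ^ 2 ≤ (2 * √2) ^ 2 := sq_add_sq_le_sq_of_forall_unit
    fun c s hcs ↦ hchsh ▸ tilted_chsh_le (hA 0) (hA 1) (hB 0) (hB 1) (hA2 0) (hA2 1) (hB2 0) (hB2 1)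
      hρ hρtr hcs
  have h2a : |2 * a| ≤ √(8 - Iobs ^ 2) := by
    refine Real.abs_le_sqrt ?_
    nlinarith [Real.sq_sqrt (zero_le_two (α := ℝ))]
  rw [le_div_iff₀ two_pos, mul_comm]
  rwa [abs_mul, abs_two] at h2a

/-- CHSH bound on a single-party marginal: if the observed CHSH value is
`I_obs ∈ [2, 2√2]`, then `|⟨A₀⟩| ≤ √(8 - I_obs²)/2`. -/
theorem chsh_marginal_bound {dA dB : ℕ}
    (A : Fin 2 → Matrix (Fin dA) (Fin dA) ℂ)
    (B : Fin 2 → Matrix (Fin dB) (Fin dB) ℂ)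
    (hA : ∀ i, (A i).IsHermitian) (hA2 : ∀ i, A i * A i = 1)
    (hB : ∀ j, (B j).IsHermitian) (hB2 : ∀ j, B j * B j = 1)
    (ρ : Matrix (Fin dA × Fin dB) (Fin dA × Fin dB) ℂ)
    (hρ : ρ.PosSemidef) (hρtr : ρ.trace = 1)
    (Iobs : ℝ) (hI : Iobs ∈ Set.Icc 2 (2 * Real.sqrt 2))
    (hobs : ((A 0 ⊗ₖ B 0) * ρ).trace + ((A 0 ⊗ₖ B 1) * ρ).trace
        + ((A 1 ⊗ₖ B 0) * ρ).trace - ((A 1 ⊗ₖ B 1) * ρ).trace = (Iobs : ℂ)) :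
    |(((A 0 ⊗ₖ (1 : Matrix (Fin dB) (Fin dB) ℂ)) * ρ).trace).re|
      ≤ Real.sqrt (8 - Iobs ^ 2) / 2 :=
  chsh_marginal_bound_general A B hA hA2 hB hB2 ρ hρ hρtr Iobs hobs
end

section
/- The maximum value of the tilted CHSH expression I^{(α,φ)} = α cos(φ/2)⟨A₀⟩ + α sin(φ/2)⟨A₁⟩ + ⟨A₀B₀⟩ + ⟨A₀B₁⟩ + ⟨A₁B₀⟩ − ⟨A₁B₁⟩ over local deterministic (classical) strategies, i.e., over assignments A₀, A₁, B₀, B₁ ∈ {−1, +1}, equals √2·α·sin((π + 2φ)/4) + 2, for any α ≥ 0 and φ ∈ [0, π/2]. -/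
open Real

lemma tilted_key (φ : ℝ) :
    Real.sqrt 2 * Real.sin ((Real.pi + 2 * φ) / 4)
      = Real.cos (φ / 2) + Real.sin (φ / 2) := by
  have h : (Real.pi + 2 * φ) / 4 = Real.pi / 4 + φ / 2 := by ring
  rw [h, Real.sin_add, Real.sin_pi_div_four, Real.cos_pi_div_four]
  have h2 : Real.sqrt 2 * Real.sqrt 2 = 2 := Real.mul_self_sqrt (by norm_num)
  linear_combination ((Real.cos (φ / 2) + Real.sin (φ / 2)) / 2) * h2

/-- The classical (local deterministic) maximum of the doubly tilted CHSH expression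
`α cos(φ/2)A₀ + α sin(φ/2)A₁ + A₀B₀ + A₀B₁ + A₁B₀ − A₁B₁` equals
`√2 α sin((π + 2φ)/4) + 2`, for `α ≥ 0` and `φ ∈ [0, π/2]`. -/
theorem tilted_chsh_classical_value (α φ : ℝ) (hα : 0 ≤ α)
    (hφ : φ ∈ Set.Icc 0 (Real.pi / 2)) :
    IsGreatest
      {v : ℝ | ∃ a₀ a₁ b₀ b₁ : ℝ,
        a₀ ∈ ({-1, 1} : Set ℝ) ∧ a₁ ∈ ({-1, 1} : Set ℝ) ∧
        b₀ ∈ ({-1, 1} : Set ℝ) ∧ b₁ ∈ ({-1, 1} : Set ℝ) ∧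
        v = α * Real.cos (φ / 2) * a₀ + α * Real.sin (φ / 2) * a₁
            + a₀ * b₀ + a₀ * b₁ + a₁ * b₀ - a₁ * b₁}
      (Real.sqrt 2 * α * Real.sin ((Real.pi + 2 * φ) / 4) + 2) := by
  obtain ⟨hφ0, hφ1⟩ := hφ
  have hc : 0 ≤ Real.cos (φ / 2) := by
    apply Real.cos_nonneg_of_mem_Icc
    constructor <;> [linarith [Real.pi_pos]; linarith]
  have hs : 0 ≤ Real.sin (φ / 2) := by
    apply Real.sin_nonneg_of_nonneg_of_le_pi
    · linarith
    · linarith [Real.pi_pos]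
  have key : Real.sqrt 2 * α * Real.sin ((Real.pi + 2 * φ) / 4)
      = α * Real.cos (φ / 2) + α * Real.sin (φ / 2) := by
    have := tilted_key φ
    nlinarith [this]
  constructor
  · refine ⟨1, 1, 1, 1, by simp, by simp, by simp, by simp, ?_⟩
    rw [key]; ring
  · rintro v ⟨a₀, a₁, b₀, b₁, ha₀, ha₁, hb₀, hb₁, rfl⟩
    rw [key]
    rcases ha₀ with rfl | rfl <;> rcases ha₁ with rfl | rfl <;>
      rcases hb₀ with rfl | rfl <;> rcases hb₁ with rfl | rfl <;>
      nlinarith [mul_nonneg hα hc, mul_nonneg hα hs]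
end

section
/- Consider six Hermitian ±1-valued observables A₀, A₁, A₂ on H_A and B₀, B₁, B₂ on H_B (so A_i² = 1, B_j² = 1), and the Bell operator I = Σ_{i=0}^{2} A_i ⊗ B_i − Σ_{i≠j} A_i ⊗ B_j. Then 6·(1⊗1) − I = Σ_{i=0}^{2} (A_i ⊗ 1 + 1 ⊗ s_i)² + (1 ⊗ (B₀ + B₁ + B₂)/2)², where s₀ = (−B₀ + B₁ + B₂)/2, s₁ = (B₀ − B₁ + B₂)/2, s₂ = (B₀ + B₁ − B₂)/2. Consequently Tr[I·ρ] ≤ 6 for every density matrix ρ on H_A ⊗ H_B. -/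
/-!
Write `s_i = (B₀ + B₁ + B₂)/2 - B_i`. Expanding the squares, the cross terms `2 A_i ⊗ s_i` add up
to `∑_{i,j} A_i ⊗ B_j - 2 ∑_i A_i ⊗ B_i = -I`, and since `A_i² = B_j² = 1` the remaining terms
`∑_i (A_i² ⊗ 1 + 1 ⊗ s_i²) + 1 ⊗ ((B₀ + B₁ + B₂)/2)²` add up to `6`. Only the commutation of
`A_i ⊗ 1` with `1 ⊗ B_j` is used, so the identity holds for commuting involutions in any algebra.
Each square is the square of a Hermitian operator, so `6 - I` is positive semidefinite and
`tr ((6 - I) ρ) ≥ 0` for every state `ρ`.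
-/

open Matrix ComplexOrder Kronecker

section CommutingObservables

variable {K R : Type*} [Field K] [CharZero K] [Ring R] [Algebra K R]

theorem bell_sos_of_commute (a b : Fin 3 → R) (hab : ∀ i j, Commute (a i) (b j))
    (ha : ∀ i, a i * a i = 1) (hb : ∀ j, b j * b j = 1) :
    (6 : K) • 1 - (∑ i, a i * b i - ∑ i, ∑ j, if i = j then 0 else a i * b j)
      = ∑ i, (a i + ((1 / 2 : K) • ∑ j, b j - b i)) ^ 2
        + ((1 / 2 : K) • (b 0 + b 1 + b 2)) ^ 2 := by
  simp only [Fin.sum_univ_three, Fin.reduceEq, if_true, if_false, sq, smul_add,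
    smul_sub, add_mul, mul_add, sub_mul, mul_sub, smul_mul_assoc, mul_smul_comm, ha, hb,
    (hab _ _).eq]
  module

end CommutingObservables

namespace Matrix

variable {l m n p 𝕜 α : Type*}

theorem kronecker_sub_s9 [Ring α] (A : Matrix l m α) (B₁ B₂ : Matrix n p α) :
    A ⊗ₖ (B₁ - B₂) = A ⊗ₖ B₁ - A ⊗ₖ B₂ := by
  ext; simp [mul_sub]

theorem kronecker_one_mul_one_kronecker [Fintype l] [Fintype m] [DecidableEq l] [DecidableEq m]
    [CommSemiring α] (A : Matrix l l α) (B : Matrix m m α) :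
    (A ⊗ₖ 1) * (1 ⊗ₖ B) = A ⊗ₖ B := by
  rw [← mul_kronecker_mul, Matrix.mul_one, Matrix.one_mul]

theorem commute_kronecker_one_one_kronecker [Fintype l] [Fintype m] [DecidableEq l]
    [DecidableEq m] [CommSemiring α] (A : Matrix l l α) (B : Matrix m m α) :
    Commute (A ⊗ₖ 1) (1 ⊗ₖ B) := by
  rw [Commute, SemiconjBy, kronecker_one_mul_one_kronecker, ← mul_kronecker_mul,
    Matrix.mul_one, Matrix.one_mul]

theorem IsHermitian.kronecker [CommMagma α] [StarMul α] {A : Matrix l l α} {B : Matrix m m α}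
    (hA : A.IsHermitian) (hB : B.IsHermitian) : (A ⊗ₖ B).IsHermitian := by
  rw [IsHermitian, conjTranspose_kronecker, hA.eq, hB.eq]

theorem IsHermitian.posSemidef_sq [Fintype n] [DecidableEq n] [Ring α] [PartialOrder α]
    [StarRing α] [StarOrderedRing α] {M : Matrix n n α} (hM : M.IsHermitian) :
    (M ^ 2).PosSemidef := by
  simpa only [hM.eq, sq] using posSemidef_conjTranspose_mul_self M

open scoped MatrixOrder in
theorem PosSemidef.trace_mul_nonneg [Fintype n] [DecidableEq n] [RCLike 𝕜] {P ρ : Matrix n n 𝕜}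
    (hP : P.PosSemidef) (hρ : ρ.PosSemidef) : 0 ≤ (P * ρ).trace := by
  obtain ⟨C, rfl⟩ := CStarAlgebra.nonneg_iff_eq_star_mul_self.mp hρ.nonneg
  rw [star_eq_conjTranspose, ← Matrix.mul_assoc, trace_mul_cycle]
  exact (hP.mul_mul_conjTranspose_same C).trace_nonneg

theorem re_trace_mul_le_of_posSemidef_smul_one_sub [Fintype n] [DecidableEq n] [RCLike 𝕜]
    {c : ℝ} {X ρ : Matrix n n 𝕜} (hX : ((c : 𝕜) • 1 - X).PosSemidef) (hρ : ρ.PosSemidef)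
    (hρ_trace : ρ.trace = 1) : RCLike.re (X * ρ).trace ≤ c := by
  have h := (RCLike.nonneg_iff.mp (hX.trace_mul_nonneg hρ)).1
  rwa [Matrix.sub_mul, Matrix.smul_mul, Matrix.one_mul, trace_sub, trace_smul, hρ_trace,
    smul_eq_mul, mul_one, map_sub, RCLike.ofReal_re, sub_nonneg] at h

end Matrix

section BellOperator

variable {m n : Type*} [Fintype m] [Fintype n] [DecidableEq m] [DecidableEq n]

theorem bell_sos_kronecker {K : Type*} [Field K] [CharZero K]
    (A : Fin 3 → Matrix m m K) (B : Fin 3 → Matrix n n K)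
    (hA2 : ∀ i, A i * A i = 1) (hB2 : ∀ j, B j * B j = 1) :
    (6 : K) • (1 : Matrix (m × n) (m × n) K)
        - ((∑ i, A i ⊗ₖ B i) - ∑ i, ∑ j, if i = j then 0 else A i ⊗ₖ B j)
      = (∑ i, (A i ⊗ₖ (1 : Matrix n n K)
            + (1 : Matrix m m K) ⊗ₖ ((1 / 2 : K) • (∑ j, B j) - B i)) ^ 2)
        + ((1 : Matrix m m K) ⊗ₖ ((1 / 2 : K) • (B 0 + B 1 + B 2))) ^ 2 := by
  have hsos := bell_sos_of_commute (K := K) (fun i ↦ A i ⊗ₖ (1 : Matrix n n K))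
    (fun j ↦ (1 : Matrix m m K) ⊗ₖ B j)
    (fun i j ↦ commute_kronecker_one_one_kronecker (A i) (B j))
    (fun i ↦ by rw [← mul_kronecker_mul, hA2, Matrix.one_mul, one_kronecker_one])
    (fun j ↦ by rw [← mul_kronecker_mul, hB2, Matrix.one_mul, one_kronecker_one])
  simpa only [kronecker_one_mul_one_kronecker, Fin.sum_univ_three, kronecker_sub_s9, kronecker_add,
    kronecker_smul] using hsos

theorem posSemidef_bell_sos {𝕜 : Type*} [RCLike 𝕜]
    (A : Fin 3 → Matrix m m 𝕜) (B : Fin 3 → Matrix n n 𝕜)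
    (hA : ∀ i, (A i).IsHermitian) (hB : ∀ j, (B j).IsHermitian) :
    ((∑ i, (A i ⊗ₖ (1 : Matrix n n 𝕜)
            + (1 : Matrix m m 𝕜) ⊗ₖ ((1 / 2 : 𝕜) • (∑ j, B j) - B i)) ^ 2)
        + ((1 : Matrix m m 𝕜) ⊗ₖ ((1 / 2 : 𝕜) • (B 0 + B 1 + B 2))) ^ 2).PosSemidef := by
  have h_half : IsSelfAdjoint (1 / 2 : 𝕜) := .div (.one _) (.ofNat 2)
  have hs : ∀ i, ((1 / 2 : 𝕜) • (∑ j, B j) - B i).IsHermitian := fun i ↦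
    (h_half.smul (isSelfAdjoint_sum _ fun j _ ↦ hB j)).sub (hB i)
  refine (posSemidef_sum _ fun i _ ↦ ?_).add ?_
  · exact ((hA i).kronecker isHermitian_one |>.add
      (isHermitian_one.kronecker (hs i))).posSemidef_sq
  · exact (isHermitian_one.kronecker
      ((((hB 0).add (hB 1)).add (hB 2)).smul h_half)).posSemidef_sq

end BellOperator

/-- Sum-of-squares decomposition of the shifted three-setting Bell operator
`6·1 − I`, where `I = Σ_i A_i ⊗ B_i − Σ_{i≠j} A_i ⊗ B_j`, and the resulting
quantum bound `Tr[I ρ] ≤ 6` for every density matrix `ρ`. -/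
theorem three_setting_bell_sos {dA dB : ℕ}
    (A : Fin 3 → Matrix (Fin dA) (Fin dA) ℂ)
    (B : Fin 3 → Matrix (Fin dB) (Fin dB) ℂ)
    (hA : ∀ i, (A i).IsHermitian) (hA2 : ∀ i, A i * A i = 1)
    (hB : ∀ j, (B j).IsHermitian) (hB2 : ∀ j, B j * B j = 1) :
    ((6 : ℂ) • (1 : Matrix (Fin dA × Fin dB) (Fin dA × Fin dB) ℂ)
        - ((∑ i, A i ⊗ₖ B i) - ∑ i, ∑ j, if i = j then 0 else A i ⊗ₖ B j)
      = (∑ i, (A i ⊗ₖ (1 : Matrix (Fin dB) (Fin dB) ℂ)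
            + (1 : Matrix (Fin dA) (Fin dA) ℂ) ⊗ₖ (((1 : ℂ) / 2) • (∑ j, B j) - B i)) ^ 2)
        + ((1 : Matrix (Fin dA) (Fin dA) ℂ) ⊗ₖ (((1 : ℂ) / 2) • (B 0 + B 1 + B 2))) ^ 2)
    ∧ ∀ ρ : Matrix (Fin dA × Fin dB) (Fin dA × Fin dB) ℂ, ρ.PosSemidef → ρ.trace = 1 →
      ((((∑ i, A i ⊗ₖ B i) - ∑ i, ∑ j, if i = j then 0 else A i ⊗ₖ B j) * ρ).trace).re
        ≤ 6 := by
  have hsos := bell_sos_kronecker A B hA2 hB2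
  refine ⟨hsos, fun ρ hρ hρ_trace ↦ ?_⟩
  have hpos := posSemidef_bell_sos A B hA hB
  rw [← hsos, ← Complex.ofReal_ofNat] at hpos
  exact re_trace_mul_le_of_posSemidef_smul_one_sub hpos hρ hρ_trace
end

section
/- Let |Ψ⟩ = (|0⟩|0⟩|e₀⟩ + |1⟩|1⟩|e₁⟩)/√2 in ℂ² ⊗ ℂ² ⊗ ℂ² with ⟨e₀|e₁⟩ = sin 2θ real and θ ∈ [π/12, π/4]. Define qubit observables A₀ = B₀ = σ_z, A₁ = B₁ = (√(4sin²2θ − 1)/(2 sin 2θ))σ_x − (1/(2 sin 2θ))σ_z, A₂ = B₂ = −(√(4sin²2θ − 1)/(2 sin 2θ))σ_x − (1/(2 sin 2θ))σ_z. Then the expectation of the Bell operator Σ_i A_i ⊗ B_i − Σ_{i≠j} A_i ⊗ B_j on the reduced state ρ_{AB} = Tr_E|Ψ⟩⟨Ψ| equals 1 + 4 sin 2θ + 1/(sin 2θ). -/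
/-! Tracing out Eve leaves `ρ_AB = (1⊗1 + σz⊗σz + s σx⊗σx − s σy⊗σy)/4` with `s = ⟨e₀|e₁⟩ = sin 2θ`.
Since the Pauli matrices are trace-orthogonal, observables `x σx + z σz` and `x' σx + z' σz` have
correlation `z z' + s x x'` in this state, so the Bell value is a real quadratic form in Eve's Bloch
coordinates. It evaluates to `1 + 4s + 1/s` using `√(4s² − 1)² = 4s² − 1`, which holds because
`s ≥ 1/2` for `θ ∈ [π/12, π/4]`. -/

open Matrix Kronecker

noncomputable section

def σz : Matrix (Fin 2) (Fin 2) ℂ := !![1, 0; 0, -1]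
def σx : Matrix (Fin 2) (Fin 2) ℂ := !![0, 1; 1, 0]

/-- Partial trace over the third (Eve) tensor factor. -/
def ptE (ρ : Matrix ((Fin 2 × Fin 2) × Fin 2) ((Fin 2 × Fin 2) × Fin 2) ℂ) :
    Matrix (Fin 2 × Fin 2) (Fin 2 × Fin 2) ℂ :=
  fun i j => ∑ k : Fin 2, ρ (i, k) (j, k)

/-- Eve's eavesdropping observables: `A₀ = σ_z`,
`A₁ = (√(4sin²2θ − 1)/(2 sin 2θ))σ_x − (1/(2 sin 2θ))σ_z`,
`A₂ = −(√(4sin²2θ − 1)/(2 sin 2θ))σ_x − (1/(2 sin 2θ))σ_z`. -/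
def eveObs (θ : ℝ) : Fin 3 → Matrix (Fin 2) (Fin 2) ℂ :=
  ![σz,
    (Real.sqrt (4 * Real.sin (2 * θ) ^ 2 - 1) / (2 * Real.sin (2 * θ))) • σx
      - (1 / (2 * Real.sin (2 * θ))) • σz,
    -((Real.sqrt (4 * Real.sin (2 * θ) ^ 2 - 1) / (2 * Real.sin (2 * θ))) • σx)
      - (1 / (2 * Real.sin (2 * θ))) • σz]

/-- The tripartite state `|Ψ⟩ = (|0⟩|0⟩|e₀⟩ + |1⟩|1⟩|e₁⟩)/√2`. -/
def Ψ (e₀ e₁ : Fin 2 → ℂ) : (Fin 2 × Fin 2) × Fin 2 → ℂ :=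
  fun p => (1 / Real.sqrt 2 : ℝ) *
    ((if p.1.1 = 0 ∧ p.1.2 = 0 then e₀ p.2 else 0)
      + (if p.1.1 = 1 ∧ p.1.2 = 1 then e₁ p.2 else 0))

lemma Ψ_apply (e₀ e₁ : Fin 2 → ℂ) (a b k : Fin 2) :
    Ψ e₀ e₁ ((a, b), k) = if a = b then (Real.sqrt 2 : ℂ)⁻¹ * ![e₀, e₁] a k else 0 := by
  fin_cases a <;> fin_cases b <;> simp [Ψ]

lemma ptE_vecMulVec_Ψ_apply (e₀ e₁ : Fin 2 → ℂ) (p q : Fin 2 × Fin 2) :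
    ptE (vecMulVec (Ψ e₀ e₁) (star (Ψ e₀ e₁))) p q
      = if p.1 = p.2 ∧ q.1 = q.2 then (star (![e₀, e₁] q.1) ⬝ᵥ ![e₀, e₁] p.1) / 2 else 0 := by
  obtain ⟨a, b⟩ := p
  obtain ⟨c, d⟩ := q
  simp only [ptE, vecMulVec_apply, Pi.star_apply, Ψ_apply]
  by_cases h : a = b ∧ c = d
  · obtain ⟨rfl, rfl⟩ := h
    have hhalf : (Real.sqrt 2 : ℂ)⁻¹ * (Real.sqrt 2 : ℂ)⁻¹ = 1 / 2 := by
      rw [← mul_inv, ← Complex.ofReal_mul, Real.mul_self_sqrt zero_le_two]; norm_num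
    simp only [and_self, ↓reduceIte, dotProduct, Finset.sum_div, Pi.star_apply]
    refine Finset.sum_congr rfl fun k _ => ?_
    simp only [star_mul', Complex.star_def, map_inv₀, Complex.conj_ofReal]
    linear_combination (![e₀, e₁] a k * starRingEnd ℂ (![e₀, e₁] c k)) * hhalf
  · rw [if_neg h]
    refine Finset.sum_eq_zero fun k _ => ?_
    rcases not_and_or.mp h with h | h <;> simp [h]

def σy : Matrix (Fin 2) (Fin 2) ℂ := !![0, -Complex.I; Complex.I, 0]

def reducedState (s : ℝ) : Matrix (Fin 2 × Fin 2) (Fin 2 × Fin 2) ℂ :=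
  (1 / 4 : ℂ) • (1 ⊗ₖ 1 + σz ⊗ₖ σz + s • (σx ⊗ₖ σx) - s • (σy ⊗ₖ σy))

lemma reducedState_apply (s : ℝ) (p q : Fin 2 × Fin 2) :
    reducedState s p q
      = if p.1 = p.2 ∧ q.1 = q.2 then (if p.1 = q.1 then 1 else (s : ℂ)) / 2 else 0 := by
  obtain ⟨a, b⟩ := p
  obtain ⟨c, d⟩ := q
  fin_cases a <;> fin_cases b <;> fin_cases c <;> fin_cases d <;>
    simp [reducedState, σx, σy, σz, kroneckerMap_apply, one_apply] <;> ring

lemma ptE_vecMulVec_Ψ {e₀ e₁ : Fin 2 → ℂ} {s : ℝ} (h₀ : star e₀ ⬝ᵥ e₀ = 1)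
    (h₁ : star e₁ ⬝ᵥ e₁ = 1) (hov : star e₀ ⬝ᵥ e₁ = s) :
    ptE (vecMulVec (Ψ e₀ e₁) (star (Ψ e₀ e₁))) = reducedState s := by
  ext p q
  rw [ptE_vecMulVec_Ψ_apply, reducedState_apply]
  congr 2
  generalize p.1 = a
  generalize q.1 = c
  fin_cases a <;> fin_cases c
  · exact h₀
  · simp [star_dotProduct, hov]
  · exact hov
  · exact h₁

lemma trace_kronecker_mul_reducedState (A B : Matrix (Fin 2) (Fin 2) ℂ) (s : ℝ) :
    ((A ⊗ₖ B) * reducedState s).trace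
      = (A.trace * B.trace + (A * σz).trace * (B * σz).trace
          + s * ((A * σx).trace * (B * σx).trace)
          - s * ((A * σy).trace * (B * σy).trace)) / 4 := by
  simp only [reducedState, Matrix.mul_smul, Matrix.mul_add, Matrix.mul_sub, ← mul_kronecker_mul,
    trace_smul, trace_add, trace_sub, trace_kronecker, Matrix.mul_one, smul_eq_mul,
    Complex.real_smul]
  ring

def xzObservable (x z : ℝ) : Matrix (Fin 2) (Fin 2) ℂ := x • σx + z • σz

lemma trace_xzObservable (x z : ℝ) : (xzObservable x z).trace = 0 := by
  simp [xzObservable, σx, σz, trace_fin_two]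

lemma trace_xzObservable_mul_σx (x z : ℝ) : (xzObservable x z * σx).trace = 2 * x := by
  simp [xzObservable, σx, σz, trace_fin_two]; ring

lemma trace_xzObservable_mul_σy (x z : ℝ) : (xzObservable x z * σy).trace = 0 := by
  simp [xzObservable, σx, σy, σz, trace_fin_two]

lemma trace_xzObservable_mul_σz (x z : ℝ) : (xzObservable x z * σz).trace = 2 * z := by
  simp [xzObservable, σx, σz, trace_fin_two]; ring

lemma trace_xzObservable_kronecker_mul_reducedState (x z x' z' s : ℝ) :
    ((xzObservable x z ⊗ₖ xzObservable x' z') * reducedState s).trace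
      = ((z * z' + s * (x * x') : ℝ) : ℂ) := by
  simp only [trace_kronecker_mul_reducedState, trace_xzObservable, trace_xzObservable_mul_σx,
    trace_xzObservable_mul_σy, trace_xzObservable_mul_σz]
  push_cast
  ring

lemma trace_bell_mul {ι n : Type*} [Fintype ι] [DecidableEq ι] [Fintype n]
    (A : ι → Matrix n n ℂ) (ρ : Matrix (n × n) (n × n) ℂ) :
    (((∑ i, A i ⊗ₖ A i) - ∑ i, ∑ j, if i = j then 0 else A i ⊗ₖ A j) * ρ).trace
      = ∑ i, ((A i ⊗ₖ A i) * ρ).trace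
          - ∑ i, ∑ j, if i = j then 0 else ((A i ⊗ₖ A j) * ρ).trace := by
  simp only [Matrix.sub_mul, Matrix.sum_mul, ite_mul, Matrix.zero_mul, trace_sub, trace_sum,
    apply_ite trace, trace_zero]

lemma trace_bell_xzObservable_mul_reducedState {ι : Type*} [Fintype ι] [DecidableEq ι]
    (x z : ι → ℝ) (s : ℝ) :
    (((∑ i, xzObservable (x i) (z i) ⊗ₖ xzObservable (x i) (z i))
        - ∑ i, ∑ j, if i = j then 0 else xzObservable (x i) (z i) ⊗ₖ xzObservable (x j) (z j))
      * reducedState s).trace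
      = ((∑ i, (z i * z i + s * (x i * x i))
          - ∑ i, ∑ j, if i = j then 0 else z i * z j + s * (x i * x j) : ℝ) : ℂ) := by
  rw [trace_bell_mul (fun i => xzObservable (x i) (z i))]
  simp only [trace_xzObservable_kronecker_mul_reducedState, Complex.ofReal_sub, Complex.ofReal_sum,
    apply_ite Complex.ofReal, Complex.ofReal_zero]

def eveBlochX (s : ℝ) : Fin 3 → ℝ :=
  ![0, Real.sqrt (4 * s ^ 2 - 1) / (2 * s), -(Real.sqrt (4 * s ^ 2 - 1) / (2 * s))]

def eveBlochZ (s : ℝ) : Fin 3 → ℝ := ![1, -(1 / (2 * s)), -(1 / (2 * s))]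

lemma eveObs_eq_xzObservable (θ : ℝ) (i : Fin 3) :
    eveObs θ i
      = xzObservable (eveBlochX (Real.sin (2 * θ)) i) (eveBlochZ (Real.sin (2 * θ)) i) := by
  fin_cases i <;> simp [eveObs, xzObservable, eveBlochX, eveBlochZ, sub_eq_add_neg, neg_smul]

lemma bell_value_eveBloch {s : ℝ} (hs : 1 / 2 ≤ s) :
    ∑ i, (eveBlochZ s i * eveBlochZ s i + s * (eveBlochX s i * eveBlochX s i))
        - ∑ i, ∑ j, (if i = j then 0
            else eveBlochZ s i * eveBlochZ s j + s * (eveBlochX s i * eveBlochX s j))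
      = 1 + 4 * s + 1 / s := by
  have hr : Real.sqrt (4 * s ^ 2 - 1) ^ 2 = 4 * s ^ 2 - 1 := Real.sq_sqrt (by nlinarith)
  have hs0 : s ≠ 0 := ne_of_gt (by linarith)
  simp only [Fin.sum_univ_three, eveBlochX, eveBlochZ, Fin.reduceEq, ↓reduceIte, cons_val]
  generalize Real.sqrt (4 * s ^ 2 - 1) = r at hr ⊢
  field_simp
  linear_combination 4 * s * hr

lemma one_half_le_sin_two_mul {θ : ℝ} (hθ : θ ∈ Set.Icc (Real.pi / 12) (Real.pi / 4)) :
    1 / 2 ≤ Real.sin (2 * θ) := by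
  rw [← Real.sin_pi_div_six]
  apply Real.sin_le_sin_of_le_of_le_pi_div_two <;> linarith [hθ.1, hθ.2, Real.pi_pos]

/-- On the reduced state `ρ_AB = Tr_E |Ψ⟩⟨Ψ|`, the three-setting Bell operator
with Eve's observables (taken by both Alice and Bob) has expectation
`1 + 4 sin 2θ + 1/sin 2θ`. -/
theorem eavesdropping_bell_value (e₀ e₁ : Fin 2 → ℂ) (θ : ℝ)
    (hθ : θ ∈ Set.Icc (Real.pi / 12) (Real.pi / 4))
    (h₀ : star e₀ ⬝ᵥ e₀ = 1) (h₁ : star e₁ ⬝ᵥ e₁ = 1)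
    (hov : star e₀ ⬝ᵥ e₁ = (Real.sin (2 * θ) : ℂ)) :
    ((((∑ i, eveObs θ i ⊗ₖ eveObs θ i)
        - ∑ i, ∑ j, if i = j then 0 else eveObs θ i ⊗ₖ eveObs θ j)
      * ptE (vecMulVec (Ψ e₀ e₁) (star (Ψ e₀ e₁)))).trace)
      = ((1 + 4 * Real.sin (2 * θ) + 1 / Real.sin (2 * θ) : ℝ) : ℂ) := by
  simp only [ptE_vecMulVec_Ψ h₀ h₁ hov, eveObs_eq_xzObservable,
    trace_bell_xzObservable_mul_reducedState, bell_value_eveBloch (one_half_le_sin_two_mul hθ)]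

end
end

section
/- If a bipartite behavior {p(a,b|x,y)} with binary inputs and outputs is local (a convex combination of products of deterministic strategies), then the Hardy expression p(0,0|0,0) − p(0,1|0,1) − p(1,0|1,0) − p(0,0|1,1) is at most 0. -/
/-- For any local behavior (convex combination of products of deterministic
strategies) with binary inputs and outputs, the Hardy expression
`p(0,0|0,0) − p(0,1|0,1) − p(1,0|1,0) − p(0,0|1,1)` is at most `0`. -/
theorem hardy_local_bound {Λ : Type*} [Fintype Λ]
    (q : Λ → ℝ) (hq : ∀ l, 0 ≤ q l) (hqsum : ∑ l, q l = 1)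
    (dA dB : Λ → Fin 2 → Fin 2)
    (p : Fin 2 → Fin 2 → Fin 2 → Fin 2 → ℝ)
    (hp : ∀ a b x y, p a b x y
      = ∑ l, q l * (if dA l x = a then 1 else 0) * (if dB l y = b then 1 else 0)) :
    p 0 0 0 0 - p 0 1 0 1 - p 1 0 1 0 - p 0 0 1 1 ≤ 0 := by
  simp only [hp, ← Finset.sum_sub_distrib]
  apply Finset.sum_nonpos
  intro l _
  have h := hq l
  have hA0 : dA l 0 = 0 ∨ dA l 0 = 1 := by omega
  have hA1 : dA l 1 = 0 ∨ dA l 1 = 1 := by omega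
  have hB0 : dB l 0 = 0 ∨ dB l 0 = 1 := by omega
  have hB1 : dB l 1 = 0 ∨ dB l 1 = 1 := by omega
  rcases hA0 with hA0 | hA0 <;> rcases hA1 with hA1 | hA1 <;>
    rcases hB0 with hB0 | hB0 <;> rcases hB1 with hB1 | hB1 <;>
    simp [hA0, hA1, hB0, hB1] <;> linarith
end
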